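/- arXiv:2301.06446 — 2 statements merged into one kernel-verified Lean document; each statement's English description precedes it below -/
import Mathlib

section
/- Let m ≡ 1 (mod 8) with m ≥ 9, n = 2^m − 1, and v = 2^{(m−1)/2} − 1. Then gcd(v, n) = 1, and for every integer a with 1 ≤ a ≤ 2^{(m−1)/2} + 2, the binary weight of (a·v mod n) is congruent to 0 or 3 modulo 4. -/
def w2 (x : ℕ) : ℕ := (Nat.digits 2 x).sum

/-!
Write `k = (m - 1) / 2`, so `m = 2k + 1`, `4 ∣ k` and `v = 2^k - 1`. Since `gcd(k, 2k + 1) = 1`,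
`gcd(2^k - 1, 2^m - 1) = 2^1 - 1 = 1`. For `a ≤ 2^k + 2` the product `a v` is already below `n`,
and its binary expansion is explicit: for `1 ≤ a ≤ 2^k` it is `a - 1` followed by the `k`-bit
complement of `a - 1` (weight `k`), for `a = 2^k + 1` it is `2^{2k} - 1` (weight `2k`), and for
`a = 2^k + 2` it is `2^{2k} + 2^k - 2` (weight `1 + (k - 1)`). All of these are `≡ 0 (mod 4)`.
-/

lemma w2_zero : w2 0 = 0 := by simp [w2]

lemma w2_one : w2 1 = 1 := by simp [w2]

lemma w2_eq_mod_two_add_div_two (x : ℕ) : w2 x = x % 2 + w2 (x / 2) := by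
  rcases Nat.eq_zero_or_pos x with rfl | hx
  · simp [w2]
  · rw [w2, Nat.digits_def' (by norm_num) hx, List.sum_cons, w2]

lemma w2_two_pow_mul_add (k x : ℕ) {y : ℕ} (hy : y < 2 ^ k) :
    w2 (2 ^ k * x + y) = w2 x + w2 y := by
  induction k generalizing y with
  | zero =>
    obtain rfl : y = 0 := by simpa using hy
    simp [w2_zero]
  | succ k ih =>
    have hdiv : (2 ^ (k + 1) * x + y) / 2 = 2 ^ k * x + y / 2 := by rw [pow_succ', mul_assoc]; omega
    have hmod : (2 ^ (k + 1) * x + y) % 2 = y % 2 := by rw [pow_succ', mul_assoc]; omega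
    rw [w2_eq_mod_two_add_div_two, hdiv, hmod, ih (by rw [pow_succ] at hy; omega),
      w2_eq_mod_two_add_div_two y]
    omega

lemma w2_add_two_pow_sub_one_sub (k : ℕ) {a : ℕ} (ha : a < 2 ^ k) :
    w2 a + w2 (2 ^ k - 1 - a) = k := by
  induction k generalizing a with
  | zero =>
    obtain rfl : a = 0 := by simpa using ha
    simp [w2_zero]
  | succ k ih =>
    have hpow : 2 ^ (k + 1) = 2 * 2 ^ k := by rw [pow_succ']
    have hcompl : (2 ^ (k + 1) - 1 - a) / 2 = 2 ^ k - 1 - a / 2 := by omega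
    have hbit : (2 ^ (k + 1) - 1 - a) % 2 = 1 - a % 2 := by omega
    have := ih (a := a / 2) (by omega)
    rw [w2_eq_mod_two_add_div_two a, w2_eq_mod_two_add_div_two (2 ^ (k + 1) - 1 - a), hcompl, hbit]
    omega

lemma w2_two_pow_sub_one (k : ℕ) : w2 (2 ^ k - 1) = k := by
  simpa [w2_zero] using w2_add_two_pow_sub_one_sub k (Nat.two_pow_pos k)

lemma w2_two_pow (k : ℕ) : w2 (2 ^ k) = 1 := by
  simpa [w2_zero, w2_one] using w2_two_pow_mul_add k 1 (Nat.two_pow_pos k)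

lemma w2_mul_two_pow_sub_one {k a : ℕ} (ha : 1 ≤ a) (hak : a ≤ 2 ^ k) :
    w2 (a * (2 ^ k - 1)) = k := by
  have hsplit : a * (2 ^ k - 1) = 2 ^ k * (a - 1) + (2 ^ k - 1 - (a - 1)) := by
    zify [ha, Nat.one_le_two_pow (n := k), (by omega : a - 1 ≤ 2 ^ k - 1)]
    ring
  rw [hsplit, w2_two_pow_mul_add k _ (by omega), w2_add_two_pow_sub_one_sub k (by omega)]

lemma w2_two_pow_add_one_mul_two_pow_sub_one (k : ℕ) :
    w2 ((2 ^ k + 1) * (2 ^ k - 1)) = 2 * k := by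
  rw [← Nat.sq_sub_sq, one_pow, ← pow_mul, w2_two_pow_sub_one, mul_comm]

lemma w2_two_pow_add_two_mul_two_pow_sub_one {k : ℕ} (hk : 1 ≤ k) :
    w2 ((2 ^ k + 2) * (2 ^ k - 1)) = k := by
  have h2 : 2 ≤ 2 ^ k := Nat.le_self_pow (by omega) 2
  have hsplit : (2 ^ k + 2) * (2 ^ k - 1) = 2 ^ k * 2 ^ k + (2 ^ k - 1 - 1) := by
    zify [Nat.one_le_two_pow (n := k), (by omega : 1 ≤ 2 ^ k - 1)]
    ring
  have hcompl := w2_add_two_pow_sub_one_sub k (a := 1) (by omega)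
  rw [w2_one] at hcompl
  rw [hsplit, w2_two_pow_mul_add k _ (by omega), w2_two_pow]
  omega

theorem stmt16 (m : ℕ) (hm : m % 8 = 1) (hm9 : 9 ≤ m)
    (n v : ℕ) (hn : n = 2 ^ m - 1) (hv : v = 2 ^ ((m - 1) / 2) - 1) :
    Nat.gcd v n = 1 ∧
    ∀ a : ℕ, 1 ≤ a → a ≤ 2 ^ ((m - 1) / 2) + 2 →
      w2 (a * v % n) % 4 = 0 ∨ w2 (a * v % n) % 4 = 3 := by
  set k := (m - 1) / 2
  have hmk : m = 2 * k + 1 := by omega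
  subst hn hv
  refine ⟨?_, fun a ha hak => Or.inl ?_⟩
  · have hkm : Nat.gcd k m = 1 := by rw [hmk]; simp
    rw [Nat.pow_sub_one_gcd_pow_sub_one, hkm, pow_one]
  have h16 : 16 ≤ 2 ^ k := Nat.pow_le_pow_right (n := 2) (by norm_num) (by omega : 4 ≤ k)
  have hlt : a * (2 ^ k - 1) < 2 ^ m - 1 := by
    have hpm : 2 ^ m = 2 * 2 ^ k * 2 ^ k := by rw [hmk, pow_succ, pow_mul']; ring
    calc a * (2 ^ k - 1) ≤ (2 ^ k + 2) * (2 ^ k - 1) := Nat.mul_le_mul_right _ hak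
      _ < 2 ^ m - 1 := by
        rw [hpm]
        zify [Nat.one_le_two_pow (n := k), (by nlinarith : 1 ≤ 2 * 2 ^ k * 2 ^ k)]
        nlinarith
  rw [Nat.mod_eq_of_lt hlt]
  obtain hle | rfl | rfl : a ≤ 2 ^ k ∨ a = 2 ^ k + 1 ∨ a = 2 ^ k + 2 := by omega
  · rw [w2_mul_two_pow_sub_one ha hle]; omega
  · rw [w2_two_pow_add_one_mul_two_pow_sub_one]; omega
  · rw [w2_two_pow_add_two_mul_two_pow_sub_one (by omega)]; omega
end

section
/- Let m ≥ 2, n = 2^m − 1, let v be odd with 1 ≤ v ≤ 2^{(m−1)/2} − 1 (m odd), and let w = 2^{(m−1)/2} − 1. Then the binary weight of v·w equals (m−1)/2. -/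
namespace Nat

theorem digits_sum_add_base_pow_mul {b k n m : ℕ} (hb : 1 < b) (hn : n < b ^ k) :
    (b.digits (n + b ^ k * m)).sum = (b.digits n).sum + (b.digits m).sum := by
  rcases m.eq_zero_or_pos with rfl | hm
  · simp
  obtain ⟨j, hj⟩ := Nat.exists_eq_add_of_le ((digits_length_le_iff hb n).mpr hn)
  rw [hj, ← digits_append_zeroes_append_digits hb hm]
  simp

theorem digits_sum_add_base_mul {b r q : ℕ} (hb : 1 < b) (hr : r < b) :
    (b.digits (r + b * q)).sum = r + (b.digits q).sum := by
  have h := digits_sum_add_base_pow_mul (n := r) (k := 1) (m := q) hb (by simpa)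
  rw [pow_one] at h
  rcases r.eq_zero_or_pos with rfl | hr0
  · simpa using h
  · simpa [digits_of_lt b r hr0.ne' hr] using h

/-- Complementing a `k`-digit number digitwise (`d ↦ b - 1 - d`) gives `b ^ k - 1 - a`. -/
theorem digits_sum_add_digits_sum_complement {b : ℕ} (hb : 1 < b) :
    ∀ {k a : ℕ}, a < b ^ k → (b.digits a).sum + (b.digits (b ^ k - 1 - a)).sum = k * (b - 1)
  | 0, a, ha => by simp_all
  | k + 1, a, ha => by
    have hq : a / b < b ^ k := Nat.div_lt_of_lt_mul (by rwa [pow_succ, mul_comm] at ha)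
    have hr : a % b < b := Nat.mod_lt a (by omega)
    have hcompl : b ^ (k + 1) - 1 - a = (b - 1 - a % b) + b * (b ^ k - 1 - a / b) := by
      have hdiv := Nat.mod_add_div a b
      have hle : b * (a / b + 1) ≤ b * b ^ k := Nat.mul_le_mul_left b hq
      rw [pow_succ', Nat.mul_sub, Nat.mul_sub, mul_one]
      rw [Nat.mul_add, mul_one] at hle
      omega
    have ih := digits_sum_add_digits_sum_complement hb hq
    rw [hcompl]
    nth_rw 1 [← Nat.mod_add_div a b]
    rw [digits_sum_add_base_mul hb hr, digits_sum_add_base_mul hb (by omega), add_mul, one_mul]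
    omega

theorem digits_sum_mul_base_pow_sub_one {b k v : ℕ} (hb : 1 < b) (hv0 : 0 < v)
    (hv : v ≤ b ^ k) : (b.digits (v * (b ^ k - 1))).sum = k * (b - 1) := by
  have hsplit : v * (b ^ k - 1) = (b ^ k - 1 - (v - 1)) + b ^ k * (v - 1) := by
    generalize b ^ k = P at hv
    obtain ⟨u, rfl⟩ := Nat.exists_eq_add_one_of_ne_zero hv0.ne'
    obtain ⟨s, rfl⟩ := Nat.exists_eq_add_of_le hv
    rw [show u + 1 + s - 1 = u + s by omega, show u + s - (u + 1 - 1) = s by omega,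
      Nat.add_sub_cancel]
    ring
  rw [hsplit, digits_sum_add_base_pow_mul hb (by omega), add_comm]
  exact digits_sum_add_digits_sum_complement hb (by omega)

end Nat

theorem stmt19_general (m : ℕ)
    (v w : ℕ)
    (hv1 : 1 ≤ v) (hv2 : v ≤ 2 ^ ((m - 1) / 2) - 1)
    (hw : w = 2 ^ ((m - 1) / 2) - 1) :
    w2 (v * w) = (m - 1) / 2 := by
  rw [w2, hw]
  simpa using Nat.digits_sum_mul_base_pow_sub_one (k := (m - 1) / 2) one_lt_two hv1 (by omega)

theorem stmt19 (m : ℕ) (hm3 : 3 ≤ m) (hmodd : Odd m)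
    (n v w : ℕ) (hn : n = 2 ^ m - 1) (hvodd : Odd v)
    (hv1 : 1 ≤ v) (hv2 : v ≤ 2 ^ ((m - 1) / 2) - 1)
    (hw : w = 2 ^ ((m - 1) / 2) - 1) :
    w2 (v * w) = (m - 1) / 2 :=
  stmt19_general m v w hv1 hv2 hw
end
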